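/- Let (ξ_i, 𝔉_i) be square-integrable martingale differences, S_n = Σ ξ_i, and B_n(0) = Σ (ξ_i⁺)² + Σ E[(ξ_i⁻)² | 𝔉_{i-1}], where ξ⁺ = max(ξ,0) and ξ⁻ = max(-ξ,0). Then for all x > 0 and p > 1, P(S_n ≥ x B_n(0)) ≤ (E[exp{-(p-1)(x²/2) B_n(0)}])^{1/p}. -/

import Mathlib

/-!
For `x ≥ 0` the process `Z_n = exp (x S_n - x² B_n(0) / 2)` is a supermartingale with `Z_0 = 1`.
By the elementary bound `exp (t - (t⁺)² / 2) ≤ 1 + t + (t⁻)² / 2`, the new factor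
`exp (x ξ_n - x² (ξ_n⁺)² / 2)` has conditional expectation at most
`1 + x² V_n / 2 ≤ exp (x² V_n / 2)`, where `V_n = E[(ξ_n⁻)² | 𝔉_{n-1}]`, and this is exactly
compensated by the predictable part of `B_n(0)`. Hence `E Z_n ≤ 1`. With `1/p + 1/q = 1`, on
`{S_n ≥ x B_n(0)}` we have `1 ≤ Z_n^{1/q} exp (-x² B_n(0) / (2q))`, and Hölder's inequality with
exponents `q, p` bounds the probability of this event by
`(E Z_n)^{1/q} (E exp (-(p - 1) x² B_n(0) / 2))^{1/p}`.
-/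

open MeasureTheory Real Finset

namespace Real

lemma exp_le_quadratic_of_nonpos {t : ℝ} (ht : t ≤ 0) : exp t ≤ 1 + t + t ^ 2 / 2 := by
  have h := quadratic_le_exp_of_nonneg (neg_nonneg.2 ht)
  have h₁ : exp t * exp (-t) = 1 := by rw [← exp_add, add_neg_cancel, exp_zero]
  -- `(1 + t + t² / 2) (1 - t + t² / 2) = 1 + t⁴ / 4 ≥ exp t · exp (-t)`
  nlinarith [mul_le_mul_of_nonneg_left h (exp_pos t).le, pow_nonneg (sq_nonneg t) 2]

lemma exp_sub_sq_div_two_le_one_add {t : ℝ} (ht : 0 ≤ t) : exp (t - t ^ 2 / 2) ≤ 1 + t := by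
  rw [← le_log_iff_exp_le (by linarith)]
  refine le_trans ?_ (le_log_one_add_of_nonneg ht)
  rw [le_div_iff₀ (by linarith)]
  nlinarith [pow_nonneg ht 3]

lemma exp_sub_max_sq_div_two_le (t : ℝ) :
    exp (t - max t 0 ^ 2 / 2) ≤ 1 + t + max (-t) 0 ^ 2 / 2 := by
  rcases le_total t 0 with ht | ht
  · simpa [max_eq_right ht, max_eq_left (neg_nonneg.2 ht)] using exp_le_quadratic_of_nonpos ht
  · simpa [max_eq_left ht, max_eq_right (neg_nonpos.2 ht)] using exp_sub_sq_div_two_le_one_add ht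

lemma exp_mul_sub_max_sq_le {x : ℝ} (hx : 0 ≤ x) (t : ℝ) :
    exp (x * t - x ^ 2 / 2 * max t 0 ^ 2) ≤ 1 + x * t + x ^ 2 / 2 * max (-t) 0 ^ 2 := by
  have h := exp_sub_max_sq_div_two_le (x * t)
  rw [← mul_zero x, ← mul_neg, ← mul_max_of_nonneg _ _ hx, ← mul_max_of_nonneg _ _ hx] at h
  convert h using 2 <;> ring

lemma mul_sub_max_sq_le_half {x : ℝ} (hx : 0 ≤ x) (t : ℝ) :
    x * t - x ^ 2 / 2 * max t 0 ^ 2 ≤ 1 / 2 := by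
  nlinarith [mul_le_mul_of_nonneg_left (le_max_left t 0) hx, sq_nonneg (x * max t 0 - 1)]

lemma one_add_mul_exp_neg_le_one (u : ℝ) : (1 + u) * exp (-u) ≤ 1 := by
  calc (1 + u) * exp (-u) ≤ exp u * exp (-u) := by gcongr; linarith [add_one_le_exp u]
    _ = 1 := by rw [← exp_add, add_neg_cancel, exp_zero]

lemma max_neg_zero_sq_le_sq (t : ℝ) : max (-t) 0 ^ 2 ≤ t ^ 2 :=
  sq_le_sq.2 (by rw [abs_of_nonneg (le_max_right _ _)]; exact max_le (neg_le_abs t) (abs_nonneg t))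

end Real

section

variable {Ω : Type*} {m : MeasurableSpace Ω} {μ : Measure Ω}

theorem measureReal_le_le_of_integral_exp_le_one {Y A : Ω → ℝ} (hY : AEMeasurable Y μ)
    (hA : AEMeasurable A μ) (hY_int : Integrable (fun ω => exp (Y ω)) μ)
    (hY_le : ∫ ω, exp (Y ω) ∂μ ≤ 1) {p : ℝ} (hp : 1 < p)
    (hA_int : Integrable (fun ω => exp (-(p - 1) * A ω)) μ) :
    μ.real {ω | A ω ≤ Y ω} ≤ (∫ ω, exp (-(p - 1) * A ω) ∂μ) ^ (1 / p) := by
  set q := p / (p - 1)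
  have hpq : q.HolderConjugate p := (HolderConjugate.conjExponent hp).symm
  have hpq' : p / q = p - 1 := div_div_cancel₀ hpq.symm.ne_zero
  set F := fun ω => exp (Y ω / q)
  set G := fun ω => exp (-(A ω / q))
  have hF_pow (ω : Ω) : F ω ^ q = exp (Y ω) := by
    rw [← exp_mul, div_mul_cancel₀ _ hpq.ne_zero]
  have hG_pow (ω : Ω) : G ω ^ p = exp (-(p - 1) * A ω) := by
    rw [← exp_mul, neg_mul, div_mul_eq_mul_div, mul_div_assoc, hpq', mul_comm, neg_mul]
  have hF : MemLp F (ENNReal.ofReal q) μ := by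
    rw [← integrable_norm_rpow_iff (by fun_prop) (by simp [hpq.pos]) ENNReal.ofReal_ne_top]
    simpa [F, ENNReal.toReal_ofReal hpq.nonneg, hF_pow] using hY_int
  have hG : MemLp G (ENNReal.ofReal p) μ := by
    rw [← integrable_norm_rpow_iff (by fun_prop) (by simp [hpq.symm.pos]) ENNReal.ofReal_ne_top]
    simpa [G, ENNReal.toReal_ofReal hpq.symm.nonneg, hG_pow] using hA_int
  have hF_nonneg (ω : Ω) : 0 ≤ F ω := (exp_pos _).le
  have hG_nonneg (ω : Ω) : 0 ≤ G ω := (exp_pos _).le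
  have hset : {ω | A ω ≤ Y ω} = {ω | 1 ≤ F ω * G ω} := by
    ext ω
    simp only [Set.mem_ofPred_eq, F, G, ← exp_add, one_le_exp_iff]
    rw [← sub_eq_add_neg, ← sub_div, le_div_iff₀ hpq.pos, zero_mul, sub_nonneg]
  have := hpq.ennrealOfReal
  calc μ.real {ω | A ω ≤ Y ω} = 1 * μ.real {ω | 1 ≤ F ω * G ω} := by rw [hset, one_mul]
    _ ≤ ∫ ω, F ω * G ω ∂μ :=
      mul_meas_ge_le_integral_of_nonneg
        (ae_of_all _ fun ω => mul_nonneg (hF_nonneg ω) (hG_nonneg ω)) (hF.integrable_mul hG) 1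
    _ ≤ (∫ ω, F ω ^ q ∂μ) ^ (1 / q) * (∫ ω, G ω ^ p ∂μ) ^ (1 / p) :=
      integral_mul_le_Lp_mul_Lq_of_nonneg hpq (ae_of_all _ hF_nonneg) (ae_of_all _ hG_nonneg) hF hG
    _ ≤ 1 * (∫ ω, G ω ^ p ∂μ) ^ (1 / p) := by
      gcongr
      refine rpow_le_one (integral_nonneg fun ω => by positivity) ?_ (by positivity)
      simpa only [hF_pow] using hY_le
    _ = (∫ ω, exp (-(p - 1) * A ω) ∂μ) ^ (1 / p) := by simp only [one_mul, hG_pow]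

lemma integrable_max_neg_zero_sq {f : Ω → ℝ} (hf : AEStronglyMeasurable f μ)
    (hf_sq : Integrable (fun ω => f ω ^ 2) μ) : Integrable (fun ω => max (-f ω) 0 ^ 2) μ := by
  refine hf_sq.mono' (by have := hf.aemeasurable; fun_prop) (ae_of_all _ fun ω => ?_)
  rw [norm_of_nonneg (sq_nonneg _)]
  exact max_neg_zero_sq_le_sq _

variable [IsFiniteMeasure μ]

lemma integrable_exp_neg_mul_of_nonneg {f : Ω → ℝ} (hf : AEMeasurable f μ)
    (hf_nonneg : 0 ≤ᵐ[μ] f) {c : ℝ} (hc : 0 ≤ c) :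
    Integrable (fun ω => exp (-c * f ω)) μ := by
  refine Integrable.of_bound (by fun_prop) 1 ?_
  filter_upwards [hf_nonneg] with ω hω
  rw [norm_of_nonneg (exp_pos _).le, exp_le_one_iff, neg_mul, neg_nonpos]
  exact mul_nonneg hc hω

lemma integrable_exp_mul_sub_max_sq {η : Ω → ℝ} (hη : AEStronglyMeasurable η μ) {x : ℝ}
    (hx : 0 ≤ x) : Integrable (fun ω => exp (x * η ω - x ^ 2 / 2 * max (η ω) 0 ^ 2)) μ := by
  have := hη.aemeasurable
  refine Integrable.of_bound (by fun_prop) (exp (1 / 2)) (ae_of_all _ fun ω => ?_)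
  rw [norm_of_nonneg (exp_pos _).le, exp_le_exp]
  exact mul_sub_max_sq_le_half hx _

theorem condExp_exp_mul_sub_max_sq_le {𝒢 : MeasurableSpace Ω} (h𝒢 : 𝒢 ≤ m) {η : Ω → ℝ}
    (hη : Integrable η μ) (hη_neg : Integrable (fun ω => max (-η ω) 0 ^ 2) μ)
    (hmart : μ[η|𝒢] =ᵐ[μ] 0) {x : ℝ} (hx : 0 ≤ x) :
    μ[fun ω => exp (x * η ω - x ^ 2 / 2 * max (η ω) 0 ^ 2)|𝒢] ≤ᵐ[μ]
      fun ω => 1 + x ^ 2 / 2 * μ[fun ω => max (-η ω) 0 ^ 2|𝒢] ω := by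
  set ν := fun ω => max (-η ω) 0 ^ 2
  have hlin : Integrable ((fun _ => (1 : ℝ)) + x • η) μ := (integrable_const 1).add (hη.smul x)
  have hq : Integrable ((fun _ => (1 : ℝ)) + x • η + (x ^ 2 / 2) • ν) μ :=
    hlin.add (hη_neg.smul _)
  have hcond_q : μ[(fun _ => (1 : ℝ)) + x • η + (x ^ 2 / 2) • ν|𝒢] =ᵐ[μ]
      fun ω => 1 + x ^ 2 / 2 * μ[ν|𝒢] ω := by
    filter_upwards [condExp_add hlin (hη_neg.smul (x ^ 2 / 2)) 𝒢,
      condExp_add (integrable_const 1) (hη.smul x) 𝒢, condExp_smul x η 𝒢,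
      condExp_smul (x ^ 2 / 2) ν 𝒢, hmart] with ω h₁ h₂ h₃ h₄ h₅
    simp only [Pi.add_apply, Pi.smul_apply, smul_eq_mul, Pi.zero_apply] at h₁ h₂ h₃ h₄ h₅
    rw [h₁, h₂, h₃, h₄, h₅, condExp_const h𝒢]
    ring
  filter_upwards [condExp_mono (integrable_exp_mul_sub_max_sq hη.1 hx) hq
    (ae_of_all _ fun ω => exp_mul_sub_max_sq_le hx (η ω)), hcond_q] with ω h₁ h₂
  exact h₁.trans_eq h₂

end

section Delyon

variable {Ω : Type*} {m : MeasurableSpace Ω} (μ : Measure Ω) (ℱ : Filtration ℕ m)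
  (ξ : ℕ → Ω → ℝ)

noncomputable def condNegPartSq (i : ℕ) : Ω → ℝ :=
  μ[fun ω => max (-ξ i ω) 0 ^ 2|ℱ (i - 1)]

/-- The self-normaliser `B_n(0) = [S]_n⁺ + ⟨S⟩_n⁻`. -/
noncomputable def delyonVar (n : ℕ) (ω : Ω) : ℝ :=
  ∑ i ∈ Icc 1 n, max (ξ i ω) 0 ^ 2 + ∑ i ∈ Icc 1 n, condNegPartSq μ ℱ ξ i ω

noncomputable def delyonExp (x : ℝ) (n : ℕ) (ω : Ω) : ℝ :=
  exp (x * ∑ i ∈ Icc 1 n, ξ i ω - x ^ 2 / 2 * delyonVar μ ℱ ξ n ω)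

variable {μ ℱ ξ} {x : ℝ}

lemma condNegPartSq_nonneg (i : ℕ) : 0 ≤ᵐ[μ] condNegPartSq μ ℱ ξ i :=
  condExp_nonneg (ae_of_all _ fun _ => sq_nonneg _)

lemma delyonVar_nonneg (n : ℕ) : 0 ≤ᵐ[μ] delyonVar μ ℱ ξ n := by
  filter_upwards [ae_all_iff.2 fun i => condNegPartSq_nonneg (μ := μ) (ℱ := ℱ) (ξ := ξ) i]
    with ω hω
  exact add_nonneg (sum_nonneg fun i _ => sq_nonneg _) (sum_nonneg fun i _ => hω i)

lemma delyonVar_succ (n : ℕ) (ω : Ω) :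
    delyonVar μ ℱ ξ (n + 1) ω = delyonVar μ ℱ ξ n ω + max (ξ (n + 1) ω) 0 ^ 2
      + condNegPartSq μ ℱ ξ (n + 1) ω := by
  simp only [delyonVar, sum_Icc_succ_top (Nat.le_add_left 1 n)]
  ring

lemma delyonExp_zero : delyonExp μ ℱ ξ x 0 = 1 := by
  funext ω
  simp [delyonExp, delyonVar]

lemma delyonExp_succ (n : ℕ) (ω : Ω) :
    delyonExp μ ℱ ξ x (n + 1) ω = delyonExp μ ℱ ξ x n ω
      * exp (-(x ^ 2 / 2 * condNegPartSq μ ℱ ξ (n + 1) ω))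
      * exp (x * ξ (n + 1) ω - x ^ 2 / 2 * max (ξ (n + 1) ω) 0 ^ 2) := by
  simp only [delyonExp, delyonVar_succ, sum_Icc_succ_top (Nat.le_add_left 1 n), ← exp_add]
  ring_nf

lemma delyonExp_pos (n : ℕ) (ω : Ω) : 0 < delyonExp μ ℱ ξ x n ω := exp_pos _

lemma stronglyAdapted_delyonVar (hadp : StronglyAdapted ℱ ξ) :
    StronglyAdapted ℱ (delyonVar μ ℱ ξ) := by
  intro n
  refine (stronglyMeasurable_fun_sum _ fun i hi => ?_).add
    (stronglyMeasurable_fun_sum _ fun i hi => ?_)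
  · exact ((((hadp i).mono (ℱ.mono (mem_Icc.1 hi).2)).measurable.max
      measurable_const).stronglyMeasurable).pow 2
  · exact stronglyMeasurable_condExp.mono (ℱ.mono (by have := (mem_Icc.1 hi).2; omega))

lemma stronglyAdapted_delyonExp (hadp : StronglyAdapted ℱ ξ) :
    StronglyAdapted ℱ (delyonExp μ ℱ ξ x) := fun n =>
  continuous_exp.comp_stronglyMeasurable ((stronglyMeasurable_const.mul
    (stronglyMeasurable_fun_sum _ fun i hi => (hadp i).mono (ℱ.mono (mem_Icc.1 hi).2))).sub
    (stronglyMeasurable_const.mul (stronglyAdapted_delyonVar hadp n)))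

lemma delyonExp_le_exp (hx : 0 ≤ x) (n : ℕ) :
    ∀ᵐ ω ∂μ, delyonExp μ ℱ ξ x n ω ≤ exp (n / 2) := by
  filter_upwards [ae_all_iff.2 fun i => condNegPartSq_nonneg (μ := μ) (ℱ := ℱ) (ξ := ξ) i]
    with ω hω
  induction n with
  | zero => simp [delyonExp_zero]
  | succ n ih =>
    rw [delyonExp_succ, Nat.cast_succ, add_div, exp_add]
    have h₁ : exp (-(x ^ 2 / 2 * condNegPartSq μ ℱ ξ (n + 1) ω)) ≤ 1 :=
      exp_le_one_iff.2 (neg_nonpos.2 (mul_nonneg (by positivity) (hω (n + 1))))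
    have h₂ := exp_le_exp.2 (mul_sub_max_sq_le_half hx (ξ (n + 1) ω))
    calc _ ≤ exp (n / 2) * 1 * exp (1 / 2) :=
          mul_le_mul (mul_le_mul ih h₁ (exp_pos _).le (exp_pos _).le) h₂ (exp_pos _).le
            (by positivity)
      _ = _ := by ring

variable [IsFiniteMeasure μ]

lemma integrable_delyonExp (hadp : StronglyAdapted ℱ ξ) (hx : 0 ≤ x) (n : ℕ) :
    Integrable (delyonExp μ ℱ ξ x n) μ := by
  refine Integrable.of_bound
    ((stronglyAdapted_delyonExp hadp n).mono (ℱ.le n)).aestronglyMeasurable (exp (n / 2)) ?_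
  filter_upwards [delyonExp_le_exp hx n] with ω hω
  rwa [norm_of_nonneg (delyonExp_pos n ω).le]

theorem condExp_delyonExp_succ_le (hadp : StronglyAdapted ℱ ξ) {n : ℕ}
    (hint : Integrable (ξ (n + 1)) μ)
    (hneg : Integrable (fun ω => max (-ξ (n + 1) ω) 0 ^ 2) μ)
    (hmart : μ[ξ (n + 1)|ℱ n] =ᵐ[μ] 0) (hx : 0 ≤ x) :
    μ[delyonExp μ ℱ ξ x (n + 1)|ℱ n] ≤ᵐ[μ] delyonExp μ ℱ ξ x n := by
  set g := condNegPartSq μ ℱ ξ (n + 1)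
  set W := fun ω => delyonExp μ ℱ ξ x n ω * exp (-(x ^ 2 / 2 * g ω))
  set h := fun ω => exp (x * ξ (n + 1) ω - x ^ 2 / 2 * max (ξ (n + 1) ω) 0 ^ 2)
  have hWh : delyonExp μ ℱ ξ x (n + 1) = W * h := funext fun ω => delyonExp_succ n ω
  have hW : StronglyMeasurable[ℱ n] W := (stronglyAdapted_delyonExp hadp n).mul
    (continuous_exp.comp_stronglyMeasurable (stronglyMeasurable_condExp.const_mul _).neg)
  have hWh_int : Integrable (W * h) μ := hWh ▸ integrable_delyonExp hadp hx (n + 1)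
  filter_upwards [condExp_mul_of_stronglyMeasurable_left hW hWh_int
      (integrable_exp_mul_sub_max_sq hint.1 hx),
    condExp_exp_mul_sub_max_sq_le (ℱ.le n) hint hneg hmart hx] with ω h₁ h₂
  rw [hWh, h₁]
  calc W ω * μ[h|ℱ n] ω ≤ W ω * (1 + x ^ 2 / 2 * g ω) :=
        mul_le_mul_of_nonneg_left h₂ (mul_pos (delyonExp_pos n ω) (exp_pos _)).le
    _ = delyonExp μ ℱ ξ x n ω * ((1 + x ^ 2 / 2 * g ω) * exp (-(x ^ 2 / 2 * g ω))) := by ring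
    _ ≤ delyonExp μ ℱ ξ x n ω :=
        mul_le_of_le_one_right (delyonExp_pos n ω).le (one_add_mul_exp_neg_le_one _)

variable (hadp : StronglyAdapted ℱ ξ) (hint : ∀ i, Integrable (ξ i) μ)
  (hneg : ∀ i, Integrable (fun ω => max (-ξ i ω) 0 ^ 2) μ)
  (hmart : ∀ i, μ[ξ (i + 1)|ℱ i] =ᵐ[μ] 0)
include hadp hint hneg hmart

theorem supermartingale_delyonExp (hx : 0 ≤ x) : Supermartingale (delyonExp μ ℱ ξ x) ℱ μ :=
  supermartingale_nat (stronglyAdapted_delyonExp hadp) (integrable_delyonExp hadp hx)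
    fun _ => condExp_delyonExp_succ_le hadp (hint _) (hneg _) (hmart _) hx

theorem integral_delyonExp_le_one [IsProbabilityMeasure μ] (hx : 0 ≤ x) (n : ℕ) :
    ∫ ω, delyonExp μ ℱ ξ x n ω ∂μ ≤ 1 := by
  simpa [delyonExp_zero] using (supermartingale_delyonExp hadp hint hneg hmart hx).setIntegral_le
    (Nat.zero_le n) MeasurableSet.univ

theorem measureReal_mul_delyonVar_le_sum_le [IsProbabilityMeasure μ] (hx : 0 < x) {p : ℝ}
    (hp : 1 < p) (n : ℕ) :
    μ.real {ω | x * delyonVar μ ℱ ξ n ω ≤ ∑ i ∈ Icc 1 n, ξ i ω} ≤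
      (∫ ω, exp (-(p - 1) * (x ^ 2 / 2) * delyonVar μ ℱ ξ n ω) ∂μ) ^ (1 / p) := by
  have hB : Measurable (delyonVar μ ℱ ξ n) :=
    ((stronglyAdapted_delyonVar hadp n).mono (ℱ.le n)).measurable
  have hS : Measurable fun ω => ∑ i ∈ Icc 1 n, ξ i ω :=
    (stronglyMeasurable_fun_sum (Icc 1 n) fun i _ => (hadp i).mono (ℱ.le i)).measurable
  have hA_nonneg : ∀ᵐ ω ∂μ, 0 ≤ x ^ 2 / 2 * delyonVar μ ℱ ξ n ω := by
    filter_upwards [delyonVar_nonneg n] with ω hω using mul_nonneg (by positivity) hω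
  have key := measureReal_le_le_of_integral_exp_le_one (by fun_prop)
    (hB.aemeasurable.const_mul _) (integrable_delyonExp hadp hx.le n)
    (integral_delyonExp_le_one hadp hint hneg hmart hx.le n) hp
    (integrable_exp_neg_mul_of_nonneg (by fun_prop) hA_nonneg (by linarith))
  simp only [mul_assoc] at key ⊢
  convert key using 3
  funext ω
  rw [← sub_nonneg, ← mul_nonneg_iff_of_pos_left hx, ← sub_nonneg (b := x ^ 2 / 2 * _)]
  congr 1
  ring

end Delyon

theorem stmt_8 {Ω : Type*} {m : MeasurableSpace Ω} {μ : Measure Ω} [IsProbabilityMeasure μ]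
    (𝔉 : ℕ → MeasurableSpace Ω) (hle : ∀ i, 𝔉 i ≤ m) (hmono : Monotone 𝔉)
    (ξ : ℕ → Ω → ℝ)
    (hadp : ∀ i, StronglyMeasurable[𝔉 i] (ξ i))
    (hsq : ∀ i, Integrable (fun ω => (ξ i ω) ^ 2) μ)
    (hmart : ∀ i : ℕ, 1 ≤ i → μ[ξ i | 𝔉 (i - 1)] =ᵐ[μ] 0)
    (n : ℕ) (x : ℝ) (hx : 0 < x) (p : ℝ) (hp : 1 < p)
    (S B : Ω → ℝ)
    (hS : S = fun ω => ∑ i ∈ Finset.Icc 1 n, ξ i ω)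
    (hB : B = fun ω =>
      (∑ i ∈ Finset.Icc 1 n, (max (ξ i ω) 0) ^ 2)
        + ∑ i ∈ Finset.Icc 1 n,
            (μ[fun ω' => (max (-(ξ i ω')) 0) ^ 2 | 𝔉 (i - 1)]) ω) :
    (μ {ω | x * B ω ≤ S ω}).toReal ≤
      (∫ ω, Real.exp (-(p - 1) * (x ^ 2 / 2) * B ω) ∂μ) ^ (1 / p) := by
  let ℱ : Filtration ℕ m := ⟨𝔉, hmono, hle⟩
  have hint (i : ℕ) : Integrable (ξ i) μ :=
    ((memLp_two_iff_integrable_sq ((hadp i).mono (hle i)).aestronglyMeasurable).2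
      (hsq i)).integrable one_le_two
  have hneg (i : ℕ) : Integrable (fun ω => max (-ξ i ω) 0 ^ 2) μ :=
    integrable_max_neg_zero_sq ((hadp i).mono (hle i)).aestronglyMeasurable (hsq i)
  subst hS hB
  exact measureReal_mul_delyonVar_le_sum_le (ℱ := ℱ) hadp hint hneg
    (fun i => hmart (i + 1) i.succ_pos) hx hp n
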